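/- Let ω be a nonnegative increasing function such that ω(t) ≤ (ln(t/4))^{−2} for 0 < t ≤ 1, and for fixed κ ∈ (0,1) and γ ∈ (0,1) define ω̃(t) := Σ_{i=1}^∞ κ^{iγ} ( ω(κ^{−i}t)·1_{κ^{−i}t ≤ 1} + ω(1)·1_{κ^{−i}t > 1} ). Then for any r ∈ (0,1], ∫₀^r ω̃(t)/t dt ≤ N (ln(4/r))^{−1}, where N > 0 is a constant (depending on κ and γ). -/

import Mathlib

/-! Write `c = κ ^ (i + 1)` and `s = min (t / c) 1`, so that the `i`-th term of `ω̃ t` is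
`c ^ γ * ω s ≤ c ^ γ / log (4 / s) ^ 2`, while `log (4 / t) ≤ log (4 / s) + log c⁻¹`.
Half of the decay of `c ^ γ = c ^ (γ / 2) * c ^ (γ / 2)` absorbs that logarithmic loss, because
`x ^ 2 * exp (-(γ / 2) * x)` is bounded; the other half sums geometrically. Hence
`ω̃ t ≲ log (4 / t) ^ (-2)`, and `(log (4 / t))⁻¹` is a primitive of `(t * log (4 / t) ^ 2)⁻¹`
vanishing at `0`. -/

open MeasureTheory Set Real

lemma sq_mul_exp_neg_mul_le {a x : ℝ} (ha : 0 < a) (hx : 0 ≤ x) :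
    x ^ 2 * exp (-(a * x)) ≤ 4 / a ^ 2 := by
  have h : (a * x) ^ 2 / 2 ≤ exp (a * x) := by
    simpa using pow_div_factorial_le_exp (a * x) (by positivity) 2
  rw [exp_neg, ← div_eq_mul_inv, div_le_div_iff₀ (exp_pos _) (by positivity)]
  nlinarith

lemma rpow_mul_sq_le_of_le_add_log {a c L M : ℝ} (ha : 0 < a) (hc0 : 0 < c) (hc1 : c ≤ 1)
    (hM : 1 ≤ M) (hL : 0 ≤ L) (hLM : L ≤ M + log c⁻¹) :
    c ^ a * L ^ 2 ≤ (2 + 8 / a ^ 2) * M ^ 2 := by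
  set x := log c⁻¹ with hx_def
  have hx : 0 ≤ x := log_nonneg ((one_le_inv₀ hc0).2 hc1)
  have hca : c ^ a = exp (-(a * x)) := by
    rw [rpow_def_of_pos hc0, hx_def, log_inv]; ring_nf
  have hca1 : c ^ a ≤ 1 := rpow_le_one hc0.le hc1 ha.le
  have hxexp := sq_mul_exp_neg_mul_le ha hx
  calc c ^ a * L ^ 2 ≤ c ^ a * (2 * M ^ 2 + 2 * x ^ 2) := by
        gcongr; nlinarith [sq_nonneg (M - x), mul_le_mul hLM hLM hL (by linarith)]
    _ ≤ 2 * M ^ 2 + 2 * (x ^ 2 * c ^ a) := by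
        nlinarith [rpow_nonneg hc0.le a, mul_le_mul_of_nonneg_left hca1 (sq_nonneg M)]
    _ ≤ 2 * M ^ 2 + 2 * (4 / a ^ 2) := by rw [hca]; linarith
    _ ≤ (2 + 8 / a ^ 2) * M ^ 2 := by
        linear_combination
          mul_le_mul_of_nonneg_left (one_le_pow₀ hM : 1 ≤ M ^ 2) (by positivity : 0 ≤ 8 / a ^ 2)

lemma one_lt_log_four : 1 < log 4 := by
  rw [show (4 : ℝ) = 2 ^ 2 by norm_num, log_pow]
  push_cast
  linarith [log_two_gt_d9]

lemma rpow_mul_apply_min_le {ω : ℝ → ℝ} (hω : ∀ s ∈ Ioc (0 : ℝ) 1, ω s ≤ (log (4 / s) ^ 2)⁻¹)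
    {a c t : ℝ} (ha : 0 < a) (hc0 : 0 < c) (hc1 : c ≤ 1) (ht0 : 0 < t) (ht1 : t ≤ 1) :
    c ^ a * ω (min (t / c) 1) ≤ (2 + 8 / a ^ 2) / log (4 / t) ^ 2 := by
  set s := min (t / c) 1
  have hs0 : 0 < s := lt_min (by positivity) one_pos
  have hs1 : s ≤ 1 := min_le_right _ _
  have hM : 1 ≤ log (4 / s) := one_lt_log_four.le.trans <|
    log_le_log (by norm_num) (le_div_self (by norm_num) hs0 hs1)
  have hL : 0 < log (4 / t) := log_pos (by rw [one_lt_div ht0]; linarith)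
  have hLM : log (4 / t) ≤ log (4 / s) + log c⁻¹ := by
    have hst : s / t ≤ c⁻¹ := by
      rw [div_le_iff₀ ht0, ← div_eq_inv_mul]; exact min_le_left _ _
    calc log (4 / t) = log (4 / s) + log (s / t) := by
          rw [← log_mul (by positivity) (by positivity)]; field_simp
      _ ≤ log (4 / s) + log c⁻¹ := by gcongr
  calc c ^ a * ω s ≤ c ^ a / log (4 / s) ^ 2 :=
        mul_le_mul_of_nonneg_left (hω s ⟨hs0, hs1⟩) (rpow_nonneg hc0.le a)
    _ ≤ (2 + 8 / a ^ 2) / log (4 / t) ^ 2 := by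
        rw [div_le_div_iff₀ (by positivity) (by positivity)]
        exact rpow_mul_sq_le_of_le_add_log ha hc0 hc1 hM hL.le hLM

lemma hasDerivAt_inv_log_four_div {t : ℝ} (ht0 : 0 < t) (ht4 : t < 4) :
    HasDerivAt (fun t ↦ (log (4 / t))⁻¹) (t * log (4 / t) ^ 2)⁻¹ t := by
  have hlog : log (4 / t) ≠ 0 := (log_pos (by rw [one_lt_div ht0]; exact ht4)).ne'
  have h := (((hasDerivAt_inv ht0.ne').const_mul 4).log (by positivity)).inv
    (by rwa [← div_eq_mul_inv])
  simp only [← div_eq_mul_inv] at h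
  exact h.congr_deriv (by field_simp)

-- At `t = 0` the function takes the junk value `(log (4 / 0))⁻¹ = 0`, which is also its limit.
lemma continuousWithinAt_inv_log_four_div_zero :
    ContinuousWithinAt (fun t ↦ (log (4 / t))⁻¹) (Ici 0) 0 := by
  rw [← continuousWithinAt_Ioi_iff_Ici, ContinuousWithinAt]
  simpa [Function.comp_def, div_eq_mul_inv] using
    tendsto_inv_atTop_zero.comp <| tendsto_log_atTop.comp <|
      (tendsto_inv_nhdsGT_zero (𝕜 := ℝ)).const_mul_atTop four_pos

lemma lintegral_Ioo_inv_mul_log_sq {r : ℝ} (hr0 : 0 ≤ r) (hr4 : r < 4) :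
    ∫⁻ t in Ioo 0 r, ENNReal.ofReal (t * log (4 / t) ^ 2)⁻¹ = ENNReal.ofReal (log (4 / r))⁻¹ := by
  have hderiv : ∀ t ∈ Ioo 0 r, HasDerivAt (fun t ↦ (log (4 / t))⁻¹) (t * log (4 / t) ^ 2)⁻¹ t :=
    fun t ht ↦ hasDerivAt_inv_log_four_div ht.1 (ht.2.trans hr4)
  have hcont : ContinuousOn (fun t ↦ (log (4 / t))⁻¹) (Icc 0 r) := by
    intro t ht
    rcases ht.1.eq_or_lt with rfl | ht0
    · exact continuousWithinAt_inv_log_four_div_zero.mono Icc_subset_Ici_self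
    · exact (hasDerivAt_inv_log_four_div ht0 (ht.2.trans_lt hr4)).continuousAt.continuousWithinAt
  have hnonneg : ∀ t ∈ Ioc 0 r, 0 ≤ (t * log (4 / t) ^ 2)⁻¹ := fun t ht ↦ by
    have := ht.1; positivity
  have hint := intervalIntegral.integrableOn_deriv_of_nonneg hcont hderiv
    (fun t ht ↦ hnonneg t (Ioo_subset_Ioc_self ht))
  rw [setLIntegral_congr Ioo_ae_eq_Ioc, ← ofReal_integral_eq_lintegral_ofReal hint
    ((ae_restrict_iff' measurableSet_Ioc).2 (ae_of_all _ hnonneg)),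
    ← intervalIntegral.integral_of_le hr0, intervalIntegral.integral_eq_sub_of_hasDerivAt_of_le
    hr0 hcont hderiv ((intervalIntegrable_iff_integrableOn_Ioc_of_le hr0).2 hint)]
  simp

lemma tsum_rpow_mul_le {κ γ : ℝ} (hκ : κ ∈ Ioo 0 1) (hγ : 0 < γ) {ω : ℝ → ℝ}
    (hω0 : ∀ s ∈ Ioc (0 : ℝ) 1, 0 ≤ ω s) (hω : ∀ s ∈ Ioc (0 : ℝ) 1, ω s ≤ (log (4 / s) ^ 2)⁻¹)
    {t : ℝ} (ht0 : 0 < t) (ht1 : t ≤ 1) :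
    ∑' i : ℕ, (κ ^ (i + 1)) ^ γ * (if t / κ ^ (i + 1) ≤ 1 then ω (t / κ ^ (i + 1)) else ω 1)
      ≤ κ ^ (γ / 2) * (2 + 8 / (γ / 2) ^ 2) / (1 - κ ^ (γ / 2)) / log (4 / t) ^ 2 := by
  set q := κ ^ (γ / 2)
  set B := q * (2 + 8 / (γ / 2) ^ 2) / log (4 / t) ^ 2
  have hq0 : 0 ≤ q := rpow_nonneg hκ.1.le _
  have hq1 : q < 1 := rpow_lt_one hκ.1.le hκ.2 (by positivity)
  set f : ℕ → ℝ := fun i ↦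
    (κ ^ (i + 1)) ^ γ * (if t / κ ^ (i + 1) ≤ 1 then ω (t / κ ^ (i + 1)) else ω 1)
  have hf_eq (i : ℕ) : f i = (κ ^ (i + 1)) ^ γ * ω (min (t / κ ^ (i + 1)) 1) := by
    simp only [f, min_def, apply_ite ω]
  have hf0 (i : ℕ) : 0 ≤ f i := by
    rw [hf_eq]
    exact mul_nonneg (rpow_nonneg (pow_nonneg hκ.1.le _) _)
      (hω0 _ ⟨lt_min (div_pos ht0 (pow_pos hκ.1 _)) one_pos, min_le_right _ _⟩)
  have hf (i : ℕ) : f i ≤ B * q ^ i := by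
    have hc0 : 0 < κ ^ (i + 1) := pow_pos hκ.1 _
    have hsplit : (κ ^ (i + 1)) ^ γ = q ^ (i + 1) * (κ ^ (i + 1)) ^ (γ / 2) := by
      rw [rpow_pow_comm hκ.1.le, ← rpow_add hc0]; ring_nf
    rw [hf_eq, hsplit, mul_assoc]
    calc _ ≤ q ^ (i + 1) * ((2 + 8 / (γ / 2) ^ 2) / log (4 / t) ^ 2) := by
          gcongr
          exact rpow_mul_apply_min_le hω (by positivity) hc0 (pow_le_one₀ hκ.1.le hκ.2.le) ht0 ht1
      _ = B * q ^ i := by ring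
  have hg := (hasSum_geometric_of_lt_one hq0 hq1).mul_left B
  exact (hasSum_le hf (Summable.of_nonneg_of_le hf0 hf hg.summable).hasSum hg).trans_eq (by ring)

theorem stmt_17
    (κ γ : ℝ) (hκ : κ ∈ Set.Ioo (0 : ℝ) 1) (hγ : γ ∈ Set.Ioo (0 : ℝ) 1) :
    ∃ N : ℝ, 0 < N ∧
      ∀ ω : ℝ → ℝ,
        (∀ t ∈ Set.Ioc (0 : ℝ) 1, 0 ≤ ω t) →
        MonotoneOn ω (Set.Ioc (0 : ℝ) 1) →
        (∀ t ∈ Set.Ioc (0 : ℝ) 1, ω t ≤ ((Real.log (t / 4)) ^ 2)⁻¹) →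
        ∀ r ∈ Set.Ioc (0 : ℝ) 1,
          (∫⁻ t in Set.Ioo (0 : ℝ) r,
              ENNReal.ofReal
                ((∑' i : ℕ, (κ ^ (i + 1)) ^ γ *
                    (if t / κ ^ (i + 1) ≤ 1 then ω (t / κ ^ (i + 1)) else ω 1)) / t))
            ≤ ENNReal.ofReal (N * (Real.log (4 / r))⁻¹) := by
  have hq1 : κ ^ (γ / 2) < 1 := rpow_lt_one hκ.1.le hκ.2 (by linarith [hγ.1])
  set N := κ ^ (γ / 2) * (2 + 8 / (γ / 2) ^ 2) / (1 - κ ^ (γ / 2))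
  have hN : 0 < N := div_pos (by have := hκ.1; positivity) (sub_pos.2 hq1)
  refine ⟨N, hN, fun ω hω0 _ hω r hr ↦ ?_⟩
  have hω' (s : ℝ) (hs : s ∈ Ioc (0 : ℝ) 1) : ω s ≤ (log (4 / s) ^ 2)⁻¹ := by
    simpa only [← inv_div 4 s, log_inv, neg_sq] using hω s hs
  calc _ ≤ ∫⁻ t in Ioo 0 r, ENNReal.ofReal N * ENNReal.ofReal (t * log (4 / t) ^ 2)⁻¹ := by
        refine setLIntegral_mono' measurableSet_Ioo fun t ht ↦ ?_
        rw [← ENNReal.ofReal_mul hN.le]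
        refine ENNReal.ofReal_le_ofReal ?_
        calc _ ≤ N / log (4 / t) ^ 2 / t := div_le_div_of_nonneg_right
              (tsum_rpow_mul_le hκ hγ.1 hω0 hω' ht.1 (ht.2.le.trans hr.2)) ht.1.le
          _ = N * (t * log (4 / t) ^ 2)⁻¹ := by ring
    _ = ENNReal.ofReal (N * (log (4 / r))⁻¹) := by
        rw [lintegral_const_mul' _ _ ENNReal.ofReal_ne_top,
          lintegral_Ioo_inv_mul_log_sq hr.1.le (by linarith [hr.2]), ← ENNReal.ofReal_mul hN.le]
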